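/- arXiv:1804.01143 — 3 statements merged into one kernel-verified Lean document; each statement's English description precedes it below -/
import Mathlib

section
/- For q ∈ (0,1), the corrector weight a_{0,n+1} = n^{q+1} − (n−q)(n+1)^q is strictly positive for every natural number n ≥ 1. -/
theorem am_first_corrector_weight_pos (q : ℝ) (hq0 : 0 < q) (hq1 : q < 1)
    (n : ℕ) (hn : 1 ≤ n) :
    0 < (n : ℝ) ^ (q + 1) - ((n : ℝ) - q) * ((n : ℝ) + 1) ^ q := by
  have hn0 : (0:ℝ) < n := by exact_mod_cast hn
  have hn1 : (1:ℝ) ≤ n := by exact_mod_cast hn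
  have hnq : (0:ℝ) < (n:ℝ) - q := by linarith
  have hb : ((1:ℝ) + 1/n) ^ q < 1 + q * (1/n) :=
    rpow_one_add_lt_one_add_mul_self (by linarith [one_div_pos.mpr hn0]) (one_div_pos.mpr hn0).ne' hq0 hq1
  have key : ((n:ℝ) + 1) ^ q = (n:ℝ)^q * ((1:ℝ) + 1/n)^q := by
    rw [← Real.mul_rpow (le_of_lt hn0) (by positivity)]
    congr 1
    field_simp
  have hpow : (0:ℝ) < (n:ℝ)^q := Real.rpow_pos_of_pos hn0 q
  have hlt : ((n:ℝ) - q) * ((n:ℝ)+1)^q < ((n:ℝ) - q) * ((n:ℝ)^q * (1 + q*(1/n))) := by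
    rw [key]
    exact mul_lt_mul_of_pos_left (mul_lt_mul_of_pos_left hb hpow) hnq
  have heq : (n:ℝ)^(q+1) = (n:ℝ)^q * n := by
    rw [Real.rpow_add hn0, Real.rpow_one]
  have hfin : ((n:ℝ) - q) * ((n:ℝ)^q * (1 + q*(1/n))) ≤ (n:ℝ)^q * n := by
    rw [mul_comm ((n:ℝ) - q) _, mul_assoc]
    apply mul_le_mul_of_nonneg_left _ hpow.le
    have h1 : (1 + q*(1/n)) * ((n:ℝ) - q) = n - q^2/n := by
      field_simp; ring
    rw [h1]
    have : (0:ℝ) ≤ q^2/n := by positivity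
    linarith
  linarith
end

section
/- Suppose f : ℝⁿ → ℝⁿ is Lipschitz continuous with constant L and x, y are two C¹ solutions of the Caputo initial value problem D_*^q x = f(x), x(0) = x₀, on [0,T] with q ∈ (0,1), in the sense of the equivalent Volterra integral equation x(t) = x₀ + (1/Γ(q)) ∫₀ᵗ (t−s)^{q−1} f(x(s)) ds. Then x = y on [0,T]. -/
/-!
Writing `I^q` for the Riemann–Liouville integral, both solutions satisfy
`x = x₀ + I^q (f ∘ x)`, so `u t = ‖x t - y t‖` obeys `u ≤ L • I^q u`. If `u` vanishes on
`[0, a]`, then for `t ≤ a + δ` the kernel only meets `u` on `[a, t]`, which gives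
`max u ≤ L δ^q / Γ(q + 1) · max u` on `[a, a + δ]`; for `δ` small this forces `u = 0` up to
`a + δ`, and finitely many steps of length `δ` cover `[0, T]`.
-/

open Set MeasureTheory Filter Topology

noncomputable section

variable {E : Type*} [NormedAddCommGroup E] [NormedSpace ℝ E]

def riemannLiouville (q : ℝ) (g : ℝ → E) (t : ℝ) : E :=
  (1 / Real.Gamma q) • ∫ s in (0 : ℝ)..t, (t - s) ^ (q - 1) • g s

lemma intervalIntegrable_sub_rpow {r : ℝ} (hr : -1 < r) (t a b : ℝ) :
    IntervalIntegrable (fun s => (t - s) ^ r) volume a b := by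
  simpa using
    (intervalIntegral.intervalIntegrable_rpow' hr (a := t - a) (b := t - b)).comp_sub_left t

lemma integral_sub_rpow {r : ℝ} (hr : -1 < r) (a t : ℝ) :
    ∫ s in a..t, (t - s) ^ r = (t - a) ^ (r + 1) / (r + 1) := by
  rw [intervalIntegral.integral_comp_sub_left (fun u => u ^ r), sub_self,
    integral_rpow (Or.inl hr), Real.zero_rpow (by linarith), sub_zero]

lemma riemannLiouville_sub {q t : ℝ} (hq : 0 < q) (ht : 0 ≤ t) {g₁ g₂ : ℝ → E}
    (hg₁ : ContinuousOn g₁ (Icc 0 t)) (hg₂ : ContinuousOn g₂ (Icc 0 t)) :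
    riemannLiouville q g₁ t - riemannLiouville q g₂ t = riemannLiouville q (g₁ - g₂) t := by
  have hk := intervalIntegrable_sub_rpow (by linarith : -1 < q - 1) t 0 t
  simp only [riemannLiouville, Pi.sub_apply, smul_sub]
  rw [intervalIntegral.integral_sub (hk.smul_continuousOn (by rwa [uIcc_of_le ht]))
    (hk.smul_continuousOn (by rwa [uIcc_of_le ht])), smul_sub]

lemma riemannLiouville_const_smul (q c : ℝ) (g : ℝ → E) (t : ℝ) :
    riemannLiouville q (c • g) t = c • riemannLiouville q g t := by
  simp only [riemannLiouville, Pi.smul_apply, smul_comm _ c, intervalIntegral.integral_smul]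

lemma norm_riemannLiouville_le {q t : ℝ} (hq : 0 < q) (ht : 0 ≤ t) {g : ℝ → E}
    {h : ℝ → ℝ} (hh : ContinuousOn h (Icc 0 t)) (hgh : ∀ s ∈ Icc 0 t, ‖g s‖ ≤ h s) :
    ‖riemannLiouville q g t‖ ≤ riemannLiouville q h t := by
  have hΓ := Real.Gamma_pos_of_pos hq
  rw [riemannLiouville, riemannLiouville, norm_smul, Real.norm_of_nonneg (by positivity),
    smul_eq_mul]
  gcongr
  refine intervalIntegral.norm_integral_le_of_norm_le ht (ae_of_all _ fun s hs => ?_)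
    ((intervalIntegrable_sub_rpow (by linarith) t 0 t).smul_continuousOn (by rwa [uIcc_of_le ht]))
  have hk : 0 ≤ (t - s) ^ (q - 1) := Real.rpow_nonneg (by linarith [hs.2]) _
  rw [norm_smul, Real.norm_of_nonneg hk, smul_eq_mul]
  exact mul_le_mul_of_nonneg_left (hgh s (Ioc_subset_Icc_self hs)) hk

lemma riemannLiouville_le_of_eqOn_zero {q a t M : ℝ} {u : ℝ → ℝ} (hq : 0 < q) (ha : 0 ≤ a)
    (hat : a ≤ t) (hu : ContinuousOn u (Icc 0 t)) (hu0 : EqOn u 0 (Icc 0 a))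
    (huM : ∀ s ∈ Icc a t, u s ≤ M) :
    riemannLiouville q u t ≤ M * (t - a) ^ q / Real.Gamma (q + 1) := by
  have hr : -1 < q - 1 := by linarith
  have hku : IntervalIntegrable (fun s => (t - s) ^ (q - 1) * u s) volume 0 t :=
    (intervalIntegrable_sub_rpow hr t 0 t).mul_continuousOn (by rwa [uIcc_of_le (ha.trans hat)])
  have hvanish : ∫ s in (0 : ℝ)..a, (t - s) ^ (q - 1) * u s = 0 := by
    refine intervalIntegral.integral_zero_ae (ae_of_all _ fun s hs => ?_)
    rw [uIoc_of_le ha] at hs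
    simp [hu0 (Ioc_subset_Icc_self hs)]
  have hbound : ∫ s in a..t, (t - s) ^ (q - 1) * u s ≤ M * ((t - a) ^ q / q) := by
    calc ∫ s in a..t, (t - s) ^ (q - 1) * u s ≤ ∫ s in a..t, (t - s) ^ (q - 1) * M := by
          refine intervalIntegral.integral_mono_on hat
            (hku.mono_set (uIcc_subset_uIcc (mem_uIcc_of_le ha hat) right_mem_uIcc))
            ((intervalIntegrable_sub_rpow hr t a t).mul_const M) fun s hs => ?_
          exact mul_le_mul_of_nonneg_left (huM s hs) (Real.rpow_nonneg (by linarith [hs.2]) _)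
      _ = M * ((t - a) ^ q / q) := by
          rw [intervalIntegral.integral_mul_const, integral_sub_rpow hr, sub_add_cancel, mul_comm]
  have hΓ := Real.Gamma_pos_of_pos hq
  calc riemannLiouville q u t = (∫ s in a..t, (t - s) ^ (q - 1) * u s) / Real.Gamma q := by
        simp only [riemannLiouville, smul_eq_mul]
        rw [← intervalIntegral.integral_add_adjacent_intervals
          (hku.mono_set (uIcc_subset_uIcc left_mem_uIcc (mem_uIcc_of_le ha hat)))
          (hku.mono_set (uIcc_subset_uIcc (mem_uIcc_of_le ha hat) right_mem_uIcc)),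
          hvanish, zero_add]
        ring
    _ ≤ M * ((t - a) ^ q / q) / Real.Gamma q := by gcongr
    _ = M * (t - a) ^ q / Real.Gamma (q + 1) := by
        rw [Real.Gamma_add_one hq.ne']
        field_simp

lemma eqOn_zero_Iic_add_of_le_riemannLiouville {u : ℝ → ℝ} {q T K a δ : ℝ} (hq : 0 < q)
    (hK : 0 ≤ K) (hδ : K * δ ^ q / Real.Gamma (q + 1) ≤ 1 / 2) (hu : ContinuousOn u (Icc 0 T))
    (hu0 : ∀ t ∈ Icc 0 T, 0 ≤ u t)
    (hle : ∀ t ∈ Icc 0 T, u t ≤ K * riemannLiouville q u t) (ha : 0 ≤ a)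
    (hua : EqOn u 0 (Icc 0 T ∩ Iic a)) : EqOn u 0 (Icc 0 T ∩ Iic (a + δ)) := by
  rintro t ⟨⟨ht0, htT⟩, htδ⟩
  rcases le_or_gt t a with hta | hat
  · exact hua ⟨⟨ht0, htT⟩, hta⟩
  set b := min T (a + δ)
  have hab : a ≤ b := le_min (hat.le.trans htT) (hat.le.trans htδ)
  have hIcc : Icc a b ⊆ Icc 0 T := Icc_subset_Icc ha (min_le_left _ _)
  obtain ⟨m, hm, hmax⟩ := isCompact_Icc.exists_isMaxOn (nonempty_Icc.2 hab) (hu.mono hIcc)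
  have hm0 : 0 ≤ u m := hu0 m (hIcc hm)
  have half : ∀ s ∈ Icc a b, u s ≤ u m / 2 := by
    intro s hs
    have hsa : s - a ≤ δ := by linarith [hs.2.trans (min_le_right T (a + δ))]
    calc u s ≤ K * riemannLiouville q u s := hle s (hIcc hs)
      _ ≤ K * (u m * (s - a) ^ q / Real.Gamma (q + 1)) := by
          gcongr
          refine riemannLiouville_le_of_eqOn_zero hq ha hs.1
            (hu.mono (Icc_subset_Icc le_rfl (hIcc hs).2)) (fun r hr => ?_)
            (fun r hr => hmax ⟨hr.1, hr.2.trans hs.2⟩)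
          exact hua ⟨⟨hr.1, hr.2.trans (hs.1.trans (hIcc hs).2)⟩, hr.2⟩
      _ ≤ K * (u m * δ ^ q / Real.Gamma (q + 1)) := by
          have := Real.Gamma_pos_of_pos (by linarith : 0 < q + 1)
          gcongr
          linarith [hs.1]
      _ = u m * (K * δ ^ q / Real.Gamma (q + 1)) := by ring
      _ ≤ u m / 2 := by nlinarith
  have hmz : u m = 0 := by linarith [half m hm]
  have ht : t ∈ Icc a b := ⟨hat.le, le_min htT htδ⟩
  show u t = 0
  exact le_antisymm (by linarith [half t ht]) (hu0 t ⟨ht0, htT⟩)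

theorem eqOn_zero_of_le_riemannLiouville {u : ℝ → ℝ} {q T K : ℝ} (hq : 0 < q) (hK : 0 ≤ K)
    (hu : ContinuousOn u (Icc 0 T)) (hu0 : ∀ t ∈ Icc 0 T, 0 ≤ u t)
    (hle : ∀ t ∈ Icc 0 T, u t ≤ K * riemannLiouville q u t) : EqOn u 0 (Icc 0 T) := by
  obtain ⟨δ, hδ, hδ0⟩ : ∃ δ, K * δ ^ q / Real.Gamma (q + 1) ≤ 1 / 2 ∧ 0 < δ := by
    have hlim : Tendsto (fun δ : ℝ => K * δ ^ q / Real.Gamma (q + 1)) (𝓝[>] 0) (𝓝 0) := by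
      have := ((continuousAt_id (x := (0 : ℝ)) |>.rpow_const (Or.inr hq.le)).const_mul
        K).div_const (Real.Gamma (q + 1))
      simpa [Real.zero_rpow hq.ne'] using this.tendsto.mono_left nhdsWithin_le_nhds
    exact ((hlim.eventually (ge_mem_nhds one_half_pos)).and self_mem_nhdsWithin).exists
  have hsteps : ∀ k : ℕ, EqOn u 0 (Icc 0 T ∩ Iic (k * δ)) := by
    intro k
    induction k with
    | zero =>
      rintro t ⟨ht, htk⟩
      obtain rfl : t = 0 := le_antisymm (by simpa using htk) ht.1
      exact le_antisymm (by simpa [riemannLiouville] using hle 0 ht) (hu0 0 ht)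
    | succ k ih =>
      simpa [add_mul] using
        eqOn_zero_Iic_add_of_le_riemannLiouville hq hK hδ hu hu0 hle (by positivity) ih
  intro t ht
  obtain ⟨k, hk⟩ := exists_nat_ge (t / δ)
  exact hsteps k ⟨ht, (div_le_iff₀ hδ0).1 hk⟩

end

theorem caputo_ivp_unique_general (n : ℕ) (q T : ℝ) (hq0 : 0 < q)
    (f : EuclideanSpace ℝ (Fin n) → EuclideanSpace ℝ (Fin n)) (L : NNReal)
    (hf : LipschitzWith L f)
    (x y : ℝ → EuclideanSpace ℝ (Fin n)) (x₀ : EuclideanSpace ℝ (Fin n))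
    (hxc : ContinuousOn x (Icc 0 T)) (hyc : ContinuousOn y (Icc 0 T))
    (hx : ∀ t ∈ Icc (0 : ℝ) T,
      x t = x₀ + (1 / Real.Gamma q) • ∫ s in (0 : ℝ)..t, ((t - s) ^ (q - 1)) • f (x s))
    (hy : ∀ t ∈ Icc (0 : ℝ) T,
      y t = x₀ + (1 / Real.Gamma q) • ∫ s in (0 : ℝ)..t, ((t - s) ^ (q - 1)) • f (y s)) :
    ∀ t ∈ Icc (0 : ℝ) T, x t = y t := by
  have hx' : ∀ t ∈ Icc 0 T, x t = x₀ + riemannLiouville q (f ∘ x) t := hx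
  have hy' : ∀ t ∈ Icc 0 T, y t = x₀ + riemannLiouville q (f ∘ y) t := hy
  have hdist : ContinuousOn (fun t => ‖x t - y t‖) (Icc 0 T) := (hxc.sub hyc).norm
  have hbound : ∀ t ∈ Icc 0 T,
      ‖x t - y t‖ ≤ L * riemannLiouville q (fun s => ‖x s - y s‖) t := by
    intro t ht
    have hsub : Icc 0 t ⊆ Icc 0 T := Icc_subset_Icc le_rfl ht.2
    calc ‖x t - y t‖ = ‖riemannLiouville q (f ∘ x - f ∘ y) t‖ := by
          rw [hx' t ht, hy' t ht, add_sub_add_left_eq_sub, riemannLiouville_sub hq0 ht.1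
            (hf.continuous.comp_continuousOn (hxc.mono hsub))
            (hf.continuous.comp_continuousOn (hyc.mono hsub))]
      _ ≤ riemannLiouville q ((L : ℝ) • fun s => ‖x s - y s‖) t :=
          norm_riemannLiouville_le hq0 ht.1 ((hdist.mono hsub).const_smul _)
            fun s _ => hf.norm_sub_le (x s) (y s)
      _ = L * riemannLiouville q (fun s => ‖x s - y s‖) t := riemannLiouville_const_smul ..
  intro t ht
  exact sub_eq_zero.1 (norm_eq_zero.1
    (eqOn_zero_of_le_riemannLiouville hq0 L.coe_nonneg hdist (fun _ _ => norm_nonneg _) hbound ht))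

theorem caputo_ivp_unique (n : ℕ) (q T : ℝ) (hq0 : 0 < q) (hq1 : q < 1) (hT : 0 < T)
    (f : EuclideanSpace ℝ (Fin n) → EuclideanSpace ℝ (Fin n)) (L : NNReal)
    (hf : LipschitzWith L f)
    (x y : ℝ → EuclideanSpace ℝ (Fin n)) (x₀ : EuclideanSpace ℝ (Fin n))
    (hxc : ContinuousOn x (Icc 0 T)) (hyc : ContinuousOn y (Icc 0 T))
    (hx : ∀ t ∈ Icc (0 : ℝ) T,
      x t = x₀ + (1 / Real.Gamma q) • ∫ s in (0 : ℝ)..t, ((t - s) ^ (q - 1)) • f (x s))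
    (hy : ∀ t ∈ Icc (0 : ℝ) T,
      y t = x₀ + (1 / Real.Gamma q) • ∫ s in (0 : ℝ)..t, ((t - s) ^ (q - 1)) • f (y s)) :
    ∀ t ∈ Icc (0 : ℝ) T, x t = y t :=
  caputo_ivp_unique_general n q T hq0 f L hf x y x₀ hxc hyc hx hy
end

section
/- Let q ∈ (0,1) and let x : [0,∞) → ℝ be C¹ and T-periodic (T > 0) and nonconstant. If additionally the Caputo derivative D_*^q x is itself T-periodic, then a contradiction follows; in particular, the Caputo derivative of a nonconstant T-periodic C¹ function is never T-periodic. -/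
/-!
Splitting the Caputo integral over `[0, t + T]` at `T` and using the periodicity of `x'`, the
periodicity of `D^q x` says exactly that `G(u) = ∫₀ᵀ (u - τ)^(-q) x'(τ) dτ` vanishes for all
`u > T`. Differentiating `k` times in `u` kills all the moments `∫₀ᵀ (c - τ)^(-q-k) x'(τ) dτ`.
Polynomials in `(c - τ)⁻¹` are dense in `C([0, T])` by Stone–Weierstrass, so
`(c - τ)^(-q) x'(τ)` vanishes on `[0, T]`; by periodicity `x' = 0` on `[0, ∞)` and `x` is constant.
-/

open Set Filter Topology MeasureTheory intervalIntegral Polynomial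

theorem periodic_on_Ici_of_hasDerivAt {x x' : ℝ → ℝ} {T : ℝ} (hx : ∀ t, HasDerivAt x (x' t) t)
    (hx' : Continuous x') (hper : ∀ t, 0 ≤ t → x (t + T) = x t) :
    ∀ t, 0 ≤ t → x' (t + T) = x' t := by
  have hIoi : EqOn (fun t => x' (t + T)) x' (Ioi 0) := fun t ht => by
    have hshift : HasDerivAt (fun s => x (s + T)) (x' (t + T)) t :=
      (hx (t + T)).comp_add_const t T
    refine hshift.unique ((hx t).congr_of_eventuallyEq ?_)
    filter_upwards [Ioi_mem_nhds ht] with s hs using hper s (le_of_lt hs)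
  have hIci := hIoi.closure (hx'.comp (continuous_add_const T)) hx'
  rw [closure_Ioi] at hIci
  exact fun t ht => hIci ht

theorem exists_mem_Ico_eq_of_periodic_on_Ici {α : Type*} {f : ℝ → α} {T : ℝ} (hT : 0 < T)
    (hper : ∀ t, 0 ≤ t → f (t + T) = f t) {s : ℝ} (hs : 0 ≤ s) : ∃ r ∈ Ico 0 T, f s = f r := by
  have hiter : ∀ n : ℕ, ∀ t, 0 ≤ t → f (t + n * T) = f t := by
    intro n
    induction n with
    | zero => simp
    | succ n ih =>
      intro t ht
      rw [Nat.cast_succ, add_one_mul, ← add_assoc, hper _ (by positivity), ih t ht]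
  set n := ⌊s / T⌋₊
  have hlow : (n : ℝ) * T ≤ s := (le_div_iff₀ hT).1 (Nat.floor_le (by positivity))
  have hhigh : s < (n + 1) * T := (div_lt_iff₀ hT).1 (Nat.lt_floor_add_one _)
  refine ⟨s - n * T, ⟨by linarith, by linarith⟩, ?_⟩
  rw [← hiter n (s - n * T) (by linarith), sub_add_cancel]

theorem intervalIntegrable_sub_rpow_mul {r : ℝ} (hr : -1 < r) {f : ℝ → ℝ} (hf : Continuous f)
    (a u : ℝ) : IntervalIntegrable (fun τ => (u - τ) ^ r * f τ) volume a u := by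
  have hkernel : IntervalIntegrable (fun τ => (u - τ) ^ r) volume a u := by
    simpa using (intervalIntegrable_rpow' hr (a := u - a) (b := u - u)).comp_sub_left u
  exact hkernel.mul_continuousOn hf.continuousOn

theorem integral_sub_rpow_mul_add_period {r T t : ℝ} (hr : -1 < r) (hT : 0 ≤ T) (ht : 0 ≤ t)
    {f : ℝ → ℝ} (hf : Continuous f) (hper : ∀ t, 0 ≤ t → f (t + T) = f t) :
    ∫ τ in 0..t + T, (t + T - τ) ^ r * f τ =
      (∫ τ in 0..T, (t + T - τ) ^ r * f τ) + ∫ τ in 0..t, (t - τ) ^ r * f τ := by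
  have hint := intervalIntegrable_sub_rpow_mul hr hf 0 (t + T)
  have hTmem : T ∈ uIcc 0 (t + T) := mem_uIcc_of_le hT (by linarith)
  rw [← integral_add_adjacent_intervals
    (hint.mono_set (uIcc_subset_uIcc left_mem_uIcc hTmem))
    (hint.mono_set (uIcc_subset_uIcc hTmem right_mem_uIcc))]
  congr 1
  have hshift := integral_comp_add_right (a := 0) (b := t) (fun τ => (t + T - τ) ^ r * f τ) T
  rw [zero_add] at hshift
  rw [← hshift]
  refine integral_congr fun τ hτ => ?_
  rw [uIcc_of_le ht] at hτ
  simp only [hper τ hτ.1, add_sub_add_right_eq_sub]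

theorem hasDerivAt_integral_sub_rpow_mul {p a b u : ℝ} (hab : a ≤ b) (hu : b < u) {f : ℝ → ℝ}
    (hf : Continuous f) :
    HasDerivAt (fun w => ∫ τ in a..b, (w - τ) ^ p * f τ)
      (p * ∫ τ in a..b, (u - τ) ^ (p - 1) * f τ) u := by
  set δ := (u - b) / 2
  have hδ : 0 < δ := by simp only [δ]; linarith
  have hsep : ∀ w ∈ Metric.closedBall u δ, ∀ τ ∈ Icc a b, δ ≤ w - τ := fun w hw τ hτ => by
    rw [Metric.mem_closedBall, Real.dist_eq, abs_le] at hw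
    simp only [δ] at hw ⊢
    linarith [hτ.2]
  obtain ⟨C, hC⟩ := ((isCompact_closedBall u δ).prod isCompact_Icc).exists_bound_of_continuousOn
    (f := fun z : ℝ × ℝ => p * ((z.1 - z.2) ^ (p - 1) * f z.2))
    (continuousOn_const.mul (((continuousOn_fst.sub continuousOn_snd).rpow_const fun z hz =>
      Or.inl (hδ.trans_le (hsep z.1 hz.1 z.2 hz.2)).ne').mul (hf.comp continuous_snd).continuousOn))
  have hIcc : uIoc a b ⊆ Icc a b := by rw [uIoc_of_le hab]; exact Ioc_subset_Icc_self
  have hball : Metric.ball u δ ⊆ Metric.closedBall u δ := Metric.ball_subset_closedBall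
  have hmeas : ∀ w, AEStronglyMeasurable (fun τ => (w - τ) ^ p * f τ)
      (volume.restrict (uIoc a b)) := fun w =>
    (((measurable_const.sub measurable_id).pow_const p).mul hf.measurable).aestronglyMeasurable
  have hint : IntervalIntegrable (fun τ => (u - τ) ^ p * f τ) volume a b := by
    refine ContinuousOn.intervalIntegrable ?_
    rw [uIcc_of_le hab]
    exact ((continuousOn_const.sub continuousOn_id).rpow_const fun τ hτ =>
      Or.inl (hδ.trans_le (hsep u (Metric.mem_closedBall_self hδ.le) τ hτ)).ne').mul hf.continuousOn
  have hmain := hasDerivAt_integral_of_dominated_loc_of_deriv_le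
    (F := fun w τ => (w - τ) ^ p * f τ) (F' := fun w τ => p * ((w - τ) ^ (p - 1) * f τ))
    (bound := fun _ => C) (Metric.ball_mem_nhds u hδ) (Eventually.of_forall hmeas) hint
    (measurable_const.mul (((measurable_const.sub measurable_id).pow_const _).mul
      hf.measurable)).aestronglyMeasurable
    (Eventually.of_forall fun τ hτ w hw => hC (w, τ) ⟨hball hw, hIcc hτ⟩)
    intervalIntegrable_const
    (Eventually.of_forall fun τ hτ w hw => ?_)
  · simpa only [intervalIntegral.integral_const_mul] using hmain.2
  · have hpos := hδ.trans_le (hsep w (hball hw) τ (hIcc hτ))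
    have := ((Real.hasDerivAt_rpow_const (p := p) (Or.inl hpos.ne')).comp w
      ((hasDerivAt_id w).sub_const τ)).mul_const (f τ)
    simpa [mul_assoc] using this

theorem integral_sub_rpow_sub_nat_mul_eq_zero {p a b : ℝ} (hp : p < 0) (hab : a ≤ b) {f : ℝ → ℝ}
    (hf : Continuous f) (h : ∀ u, b < u → ∫ τ in a..b, (u - τ) ^ p * f τ = 0) (k : ℕ) :
    ∀ u, b < u → ∫ τ in a..b, (u - τ) ^ (p - k) * f τ = 0 := by
  induction k with
  | zero => simpa using h
  | succ k ih =>
    intro u hu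
    have hderiv := hasDerivAt_integral_sub_rpow_mul (p := p - k) hab hu hf
    have hzero : HasDerivAt (fun w => ∫ τ in a..b, (w - τ) ^ (p - k) * f τ) 0 u :=
      (hasDerivAt_const u 0).congr_of_eventuallyEq
        (eventually_of_mem (Ioi_mem_nhds hu) fun w hw => ih w hw)
    have hpk : p - k ≠ 0 := by linarith [k.cast_nonneg (α := ℝ)]
    rw [Nat.cast_succ, ← sub_sub]
    exact (mul_eq_zero.1 (hderiv.unique hzero)).resolve_left hpk

theorem exists_polynomial_eval_near_of_injOn {a b ε : ℝ} {g e : ℝ → ℝ}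
    (hg : ContinuousOn g (Icc a b)) (he : ContinuousOn e (Icc a b)) (he_inj : InjOn e (Icc a b))
    (hε : 0 < ε) : ∃ P : ℝ[X], ∀ τ ∈ Icc a b, |P.eval (e τ) - g τ| < ε := by
  let e' : C(Icc a b, ℝ) := ⟨fun τ => e τ, he.domRestrict⟩
  have hsep : (Algebra.adjoin ℝ {e'}).SeparatesPoints := fun σ τ hστ =>
    ⟨e', ⟨e', Algebra.subset_adjoin rfl, rfl⟩, fun h => hστ (Subtype.ext (he_inj σ.2 τ.2 h))⟩
  obtain ⟨⟨φ, hφ⟩, hφg⟩ := ContinuousMap.exists_mem_subalgebra_near_continuous_of_separatesPoints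
    _ hsep _ hg.domRestrict ε hε
  rw [Algebra.adjoin_singleton_eq_range_aeval] at hφ
  obtain ⟨P, rfl⟩ := hφ
  refine ⟨P, fun τ hτ => ?_⟩
  have hφτ : ‖aeval e' P ⟨τ, hτ⟩ - g τ‖ < ε := hφg ⟨τ, hτ⟩
  rwa [aeval_continuousMap_apply, Real.norm_eq_abs] at hφτ

theorem eqOn_zero_of_integral_mul_pow_eq_zero {a b : ℝ} (hab : a < b) {g e : ℝ → ℝ}
    (hg : ContinuousOn g (Icc a b)) (he : ContinuousOn e (Icc a b)) (he_inj : InjOn e (Icc a b))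
    (h : ∀ n : ℕ, ∫ τ in a..b, g τ * e τ ^ n = 0) : EqOn g 0 (Icc a b) := by
  have hpoly : ∀ P : ℝ[X], ∫ τ in a..b, g τ * P.eval (e τ) = 0 := fun P => by
    simp_rw [eval_eq_sum_range, Finset.mul_sum, mul_left_comm (g _)]
    rw [integral_finsetSum (f := fun n τ => P.coeff n * (g τ * e τ ^ n)) fun n _ =>
      (continuousOn_const.mul (hg.mul (he.pow n))).intervalIntegrable_of_Icc hab.le]
    simp [intervalIntegral.integral_const_mul, h]
  obtain ⟨M, hM⟩ := isCompact_Icc.exists_bound_of_continuousOn hg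
  have hM0 : 0 ≤ M := (norm_nonneg _).trans (hM a (left_mem_Icc.2 hab.le))
  have hsmall : ∀ ε > 0, ∫ τ in a..b, g τ ^ 2 ≤ M * ε * (b - a) := fun ε hε => by
    obtain ⟨P, hP⟩ := exists_polynomial_eval_near_of_injOn hg he he_inj hε
    have hPe : ContinuousOn (fun τ => P.eval (e τ)) (Icc a b) := P.continuous.comp_continuousOn he
    calc ∫ τ in a..b, g τ ^ 2 = ∫ τ in a..b, g τ * (g τ - P.eval (e τ)) := by
          simp_rw [mul_sub, ← sq]
          rw [integral_sub (f := fun τ => g τ ^ 2) (g := fun τ => g τ * P.eval (e τ))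
            ((hg.pow 2).intervalIntegrable_of_Icc hab.le)
            ((hg.mul hPe).intervalIntegrable_of_Icc hab.le), hpoly P, sub_zero]
      _ ≤ ‖∫ τ in a..b, g τ * (g τ - P.eval (e τ))‖ := Real.le_norm_self _
      _ ≤ M * ε * |b - a| := norm_integral_le_of_norm_le_const fun τ hτ => by
          have hτ' : τ ∈ Icc a b := Ioc_subset_Icc_self ((uIoc_of_le hab.le) ▸ hτ)
          rw [norm_mul, norm_sub_rev, Real.norm_eq_abs (P.eval (e τ) - g τ)]
          exact mul_le_mul (hM τ hτ') (hP τ hτ').le (abs_nonneg _) hM0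
      _ = M * ε * (b - a) := by rw [abs_of_pos (sub_pos.2 hab)]
  have hlim : Tendsto (fun ε => M * ε * (b - a)) (𝓝[>] 0) (𝓝 0) := by
    have hcont : Tendsto (fun ε => M * ε * (b - a)) (𝓝 0) (𝓝 (M * 0 * (b - a))) :=
      ((continuous_const.mul continuous_id).mul continuous_const).tendsto 0
    simpa using hcont.mono_left nhdsWithin_le_nhds
  have hsq : ∫ τ in a..b, g τ ^ 2 ≤ 0 :=
    ge_of_tendsto hlim (eventually_nhdsWithin_of_forall hsmall)
  intro τ hτ
  by_contra hne
  exact (integral_pos hab (hg.pow 2) (fun _ _ => sq_nonneg _)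
    ⟨τ, hτ, (sq_nonneg _).lt_of_ne (pow_ne_zero 2 hne).symm⟩).not_ge hsq

theorem eqOn_zero_of_integral_sub_rpow_mul_eq_zero {p a b : ℝ} (hp : p < 0) (hab : a < b)
    {f : ℝ → ℝ} (hf : Continuous f) (h : ∀ u, b < u → ∫ τ in a..b, (u - τ) ^ p * f τ = 0) :
    EqOn f 0 (Icc a b) := by
  have hpos : ∀ τ ∈ Icc a b, 0 < b + 1 - τ := fun τ hτ => by linarith [hτ.2]
  have hcont : ContinuousOn (fun τ => b + 1 - τ) (Icc a b) := by fun_prop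
  have hg : ContinuousOn (fun τ => (b + 1 - τ) ^ p * f τ) (Icc a b) :=
    (hcont.rpow_const fun τ hτ => Or.inl (hpos τ hτ).ne').mul hf.continuousOn
  have he : ContinuousOn (fun τ => (b + 1 - τ)⁻¹) (Icc a b) :=
    hcont.inv₀ fun τ hτ => (hpos τ hτ).ne'
  have he_inj : InjOn (fun τ => (b + 1 - τ)⁻¹) (Icc a b) := fun σ _ τ _ hστ => by
    simpa using hστ
  have hmoments (n : ℕ) : ∫ τ in a..b, (b + 1 - τ) ^ p * f τ * ((b + 1 - τ)⁻¹) ^ n = 0 := by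
    rw [← integral_sub_rpow_sub_nat_mul_eq_zero hp hab.le hf h n (b + 1) (by linarith)]
    refine integral_congr fun τ hτ => ?_
    rw [uIcc_of_le hab.le] at hτ
    rw [Real.rpow_sub (hpos τ hτ), Real.rpow_natCast, inv_pow]
    ring
  intro τ hτ
  have hgτ := eqOn_zero_of_integral_mul_pow_eq_zero hab hg he he_inj hmoments hτ
  exact (mul_eq_zero.1 hgτ).resolve_left (Real.rpow_pos_of_pos (hpos τ hτ) p).ne'

theorem caputo_deriv_periodic_contradiction (q T : ℝ) (hq0 : 0 < q) (hq1 : q < 1)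
    (hT : 0 < T) (x x' : ℝ → ℝ)
    (hx : ∀ t : ℝ, HasDerivAt x (x' t) t) (hx' : Continuous x')
    (hper : ∀ t : ℝ, 0 ≤ t → x (t + T) = x t)
    (hnonconst : ∃ a b : ℝ, 0 ≤ a ∧ 0 ≤ b ∧ x a ≠ x b) :
    ¬ (∀ t : ℝ, 0 ≤ t →
        (1 / Real.Gamma (1 - q)) * ∫ τ in (0 : ℝ)..(t + T), (t + T - τ) ^ (-q) * x' τ
          = (1 / Real.Gamma (1 - q)) * ∫ τ in (0 : ℝ)..t, (t - τ) ^ (-q) * x' τ) := by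
  intro hcaputo
  have hΓ : 1 / Real.Gamma (1 - q) ≠ 0 :=
    one_div_ne_zero (Real.Gamma_pos_of_pos (by linarith)).ne'
  have hx'per := periodic_on_Ici_of_hasDerivAt hx hx' hper
  have hwindow : ∀ u, T < u → ∫ τ in 0..T, (u - τ) ^ (-q) * x' τ = 0 := fun u hu => by
    have hsplit := integral_sub_rpow_mul_add_period (r := -q) (t := u - T) (by linarith) hT.le
      (by linarith) hx' hx'per
    have hshift := mul_left_cancel₀ hΓ (hcaputo (u - T) (by linarith))
    rw [sub_add_cancel] at hsplit hshift
    linarith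
  have hx'zero : ∀ s, 0 ≤ s → x' s = 0 := fun s hs => by
    obtain ⟨r, hr, hsr⟩ := exists_mem_Ico_eq_of_periodic_on_Ici hT hx'per hs
    rw [hsr]
    exact eqOn_zero_of_integral_sub_rpow_mul_eq_zero (neg_neg_of_pos hq0) hT hx' hwindow
      (Ico_subset_Icc_self hr)
  have hconst : ∀ s, 0 ≤ s → x s = x 0 := fun s hs =>
    constant_of_has_deriv_right_zero
      (continuous_iff_continuousAt.2 fun t => (hx t).continuousAt).continuousOn
      (fun t ht => hx'zero t ht.1 ▸ (hx t).hasDerivWithinAt) s ⟨hs, le_rfl⟩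
  obtain ⟨a, b, ha, hb, hab⟩ := hnonconst
  exact hab ((hconst a ha).trans (hconst b hb).symm)
end
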